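/- arXiv:1503.07063 — 6 statements merged into one kernel-verified Lean document; each statement's English description precedes it below -/
import Mathlib

section
/- Let c be the Coulomb cost on (ℝ³)^N. There exists a nondecreasing sequence of functions c_n : (ℝ³)^N → [0,∞) such that each c_n is lower semicontinuous, permutation invariant, satisfies 0 ≤ c_n ≤ c, takes only finitely many values with each level set a finite union of products of Borel subsets of ℝ³ (i.e. c_n is an elementary function), and c_n converges pointwise monotonically upward to c. -/
open MeasureTheory Filter Topology
open scoped ENNReal

noncomputable section

abbrev E3 := EuclideanSpace ℝ (Fin 3)

/-- The Coulomb cost on (ℝ³)^N, with value +∞ when two coordinates coincide. -/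
def coulomb (N : ℕ) (x : Fin N → E3) : ℝ≥0∞ :=
  ∑ p ∈ Finset.univ.filter (fun p : Fin N × Fin N => p.1 < p.2),
    (ENNReal.ofReal (dist (x p.1) (x p.2)))⁻¹

/-- An elementary function on (ℝ³)^N: a finite linear combination of characteristic
functions of products of Borel sets. -/
def Elementary (N : ℕ) (f : (Fin N → E3) → ℝ) : Prop :=
  ∃ (k : ℕ) (a : Fin k → ℝ) (A : Fin k → Fin N → Set E3),
    (∀ i j, MeasurableSet (A i j)) ∧
    ∀ x, f x = ∑ i, a i * ∏ j, Set.indicator (A i j) (fun _ => (1 : ℝ)) (x j)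

open TopologicalSpace
open scoped NNReal

/-! Because `coulomb N` is continuous with values in `ℝ≥0∞`, every `c < coulomb N x` is
exceeded by `coulomb N` on a whole box `U₁ × ⋯ × U_N` around `x` built from a countable basis
of `ℝ³`. Enumerate the countably many pairs (box `U`, height `m`), and to each attach the
step function `min m (inf_U coulomb) · 1_U`; the maximum of the first `n` of them, composed
with all permutations of the coordinates, is lower semicontinuous, symmetric, below
`coulomb N`, and increases to it. It is elementary because elementary functions form an
algebra and have finite range, so they are stable under any `φ : ℝ → ℝ` (which agrees with a
Lagrange interpolation polynomial on that range), in particular under `max`. -/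

theorem Finset.prod_indicator_one_apply_eq_indicator_pi {ι X R : Type*} [Fintype ι]
    [CommMonoidWithZero R] (A : ι → Set X) (x : ι → X) :
    ∏ j, (A j).indicator (fun _ => (1 : R)) (x j) = (Set.univ.pi A).indicator 1 x := by
  classical
  simp [Set.indicator_apply, Finset.prod_boole]

theorem Finset.sum_filter_lt_comp_perm {α M : Type*} [Fintype α] [LinearOrder α]
    [AddCommMonoid M] (g : α → α → M) (hg : ∀ i j, g i j = g j i) (σ : Equiv.Perm α) :
    ∑ p ∈ univ.filter (fun p : α × α => p.1 < p.2), g (σ p.1) (σ p.2) =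
      ∑ p ∈ univ.filter (fun p : α × α => p.1 < p.2), g p.1 p.2 := by
  let sortPair (τ : Equiv.Perm α) (p : α × α) : α × α := (min (τ p.1) (τ p.2), max (τ p.1) (τ p.2))
  have hlt (τ : Equiv.Perm α) (p : α × α) (hp : p.1 < p.2) : (sortPair τ p).1 < (sortPair τ p).2 :=
    min_lt_max.2 (τ.injective.ne hp.ne)
  have hsort (τ : Equiv.Perm α) (p : α × α) (hp : p.1 < p.2) : sortPair τ⁻¹ (sortPair τ p) = p := by
    obtain ⟨a, b⟩ := p
    rcases le_total (τ a) (τ b) with h | h <;> simp [sortPair, h, hp.le]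
  refine sum_nbij' (sortPair σ) (sortPair σ⁻¹) (fun p hp => ?_) (fun p hp => ?_)
    (fun p hp => ?_) (fun p hp => ?_) (fun p hp => ?_)
  all_goals simp only [mem_filter, mem_univ, true_and] at hp ⊢
  · exact hlt σ p hp
  · exact hlt σ⁻¹ p hp
  · exact hsort σ p hp
  · simpa using hsort σ⁻¹ p hp
  · rcases le_total (σ p.1) (σ p.2) with h | h
    · simp [sortPair, h]
    · simp [sortPair, h, hg (σ p.1)]

theorem exists_isTopologicalBasis_seq_boxes (ι X : Type*) [Finite ι] [TopologicalSpace X]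
    [SecondCountableTopology X] :
    ∃ (B : Set (Set X)) (e : ℕ → (ι → Set X) × ℕ), IsTopologicalBasis B ∧
      (∀ k j, (e k).1 j ∈ B) ∧ (Set.univ.pi fun _ => B) ×ˢ Set.univ ⊆ Set.range e := by
  -- `univ` is adjoined so that the boxes form a nonempty family even when `X` is empty.
  let B := insert Set.univ (countableBasis X)
  have hB : IsTopologicalBasis B := (isBasis_countableBasis X).of_isOpen_of_subset
    (by rintro u (rfl | hu); exacts [isOpen_univ, isOpen_of_mem_countableBasis hu])
    (Set.subset_insert _ _)
  obtain ⟨e, he⟩ := ((Set.countable_univ_pi (s := fun _ : ι => B) fun _ =>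
    (countable_countableBasis X).insert Set.univ).prod Set.countable_univ).exists_eq_range
    ⟨(fun _ => Set.univ, 0), Set.mk_mem_prod (fun _ _ => Set.mem_insert _ _) (Set.mem_univ 0)⟩
  exact ⟨B, e, hB, fun k j => (he.ge ⟨k, rfl⟩).1 j (Set.mem_univ j), he.le⟩

theorem lowerSemicontinuous_finset_sup {α ι β : Type*} [TopologicalSpace α] [LinearOrder β]
    [OrderBot β] (s : Finset ι) {g : ι → α → β} (hg : ∀ i ∈ s, LowerSemicontinuous (g i)) :
    LowerSemicontinuous fun x => s.sup fun i => g i x := by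
  induction s using Finset.cons_induction with
  | empty => exact lowerSemicontinuous_const
  | cons i s hi ih =>
    simp only [Finset.sup_cons]
    exact (hg i (Finset.mem_cons_self i s)).sup (ih fun j hj => hg j (Finset.mem_cons_of_mem hj))

section BoxStep

variable {ι X : Type*}

def boxStep (f : (ι → X) → ℝ≥0∞) (U : ι → Set X) (m : ℕ) : (ι → X) → ℝ≥0 :=
  (Set.univ.pi U).indicator fun _ => (min (m : ℝ≥0∞) (⨅ y ∈ Set.univ.pi U, f y)).toNNReal

variable {f : (ι → X) → ℝ≥0∞} {U : ι → Set X} {m : ℕ} {x : ι → X}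

theorem coe_boxStep_le : (boxStep f U m x : ℝ≥0∞) ≤ f x := by
  by_cases hx : x ∈ Set.univ.pi U
  · rw [boxStep, Set.indicator_of_mem hx]
    exact ENNReal.coe_toNNReal_le_self.trans ((min_le_right _ _).trans (biInf_le f hx))
  · simp [boxStep, hx]

theorem le_coe_boxStep {c : ℝ≥0∞} (hx : x ∈ Set.univ.pi U) (hcm : c ≤ m)
    (hcf : ∀ y ∈ Set.univ.pi U, c ≤ f y) : c ≤ boxStep f U m x := by
  rw [boxStep, Set.indicator_of_mem hx,
    ENNReal.coe_toNNReal (min_lt_of_left_lt (ENNReal.natCast_lt_top m)).ne]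
  exact le_min hcm (le_iInf₂ hcf)

theorem lowerSemicontinuous_boxStep [TopologicalSpace X] [Finite ι] (hU : ∀ j, IsOpen (U j)) :
    LowerSemicontinuous (boxStep f U m) :=
  (isOpen_set_pi Set.finite_univ fun j _ => hU j).lowerSemicontinuous_indicator bot_le

end BoxStep

section SymmApprox

variable {ι X : Type*} [Fintype ι] [DecidableEq ι]

def symmApprox (f : (ι → X) → ℝ≥0∞) (e : ℕ → (ι → Set X) × ℕ) (n : ℕ) (x : ι → X) : ℝ≥0 :=
  (Finset.range n ×ˢ Finset.univ).sup fun q : ℕ × Equiv.Perm ι =>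
    boxStep f (e q.1).1 (e q.1).2 (x ∘ q.2)

variable {f : (ι → X) → ℝ≥0∞} {e : ℕ → (ι → Set X) × ℕ}

theorem boxStep_le_symmApprox {k n : ℕ} (hk : k < n) (σ : Equiv.Perm ι) (x : ι → X) :
    boxStep f (e k).1 (e k).2 (x ∘ σ) ≤ symmApprox f e n x :=
  Finset.le_sup (f := fun q : ℕ × Equiv.Perm ι => boxStep f (e q.1).1 (e q.1).2 (x ∘ q.2))
    (b := (k, σ)) (Finset.mem_product.2 ⟨Finset.mem_range.2 hk, Finset.mem_univ σ⟩)

theorem monotone_symmApprox (x : ι → X) : Monotone fun n => symmApprox f e n x :=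
  fun _ _ hmn => Finset.sup_mono (Finset.product_subset_product_left (Finset.range_mono hmn))

theorem coe_symmApprox_le (hf : ∀ (σ : Equiv.Perm ι) x, f (x ∘ σ) = f x) (n : ℕ) (x : ι → X) :
    (symmApprox f e n x : ℝ≥0∞) ≤ f x := by
  rw [symmApprox, ENNReal.coe_finset_sup]
  exact Finset.sup_le fun q _ => coe_boxStep_le.trans (hf q.2 x).le

theorem symmApprox_comp_perm (n : ℕ) (σ : Equiv.Perm ι) (x : ι → X) :
    symmApprox f e n (x ∘ σ) = symmApprox f e n x := by
  have hle : ∀ (σ : Equiv.Perm ι) x, symmApprox f e n (x ∘ σ) ≤ symmApprox f e n x :=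
    fun σ x => Finset.sup_le fun q hq =>
      boxStep_le_symmApprox (Finset.mem_range.1 (Finset.mem_product.1 hq).1) (σ * q.2) x
  refine (hle σ x).antisymm ?_
  simpa [Function.comp_assoc] using hle σ⁻¹ (x ∘ σ)

theorem lowerSemicontinuous_symmApprox [TopologicalSpace X] (he : ∀ k j, IsOpen ((e k).1 j))
    (n : ℕ) : LowerSemicontinuous (symmApprox f e n) :=
  lowerSemicontinuous_finset_sup _ fun q _ =>
    (lowerSemicontinuous_boxStep (he q.1)).comp (continuous_pi fun j => continuous_apply (q.2 j))

theorem iSup_symmApprox [TopologicalSpace X] {B : Set (Set X)} (hB : IsTopologicalBasis B)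
    (he : (Set.univ.pi fun _ => B) ×ˢ Set.univ ⊆ Set.range e)
    (hf : LowerSemicontinuous f) (hperm : ∀ (σ : Equiv.Perm ι) x, f (x ∘ σ) = f x) (x : ι → X) :
    ⨆ n, (symmApprox f e n x : ℝ≥0∞) = f x := by
  refine le_antisymm (iSup_le fun n => coe_symmApprox_le hperm n x)
    (le_of_forall_lt fun b hb => ?_)
  obtain ⟨c, hbc, hcx⟩ := exists_between hb
  obtain ⟨u, hu, hsub⟩ := isOpen_pi_iff'.1 (hf.isOpen_preimage c) x hcx
  choose U hUB hxU hUu using fun j => hB.exists_subset_of_mem_open (hu j).2 (hu j).1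
  obtain ⟨m, hm⟩ := ENNReal.exists_nat_gt (hcx.trans_le le_top).ne
  obtain ⟨k, hk⟩ := he (Set.mk_mem_prod (fun j _ => hUB j) (Set.mem_univ m))
  have hc : c ≤ boxStep f (e k).1 (e k).2 (x ∘ (1 : Equiv.Perm ι)) := by
    rw [hk]
    exact le_coe_boxStep (fun j _ => hxU j) hm.le
      fun y hy => (hsub (Set.pi_mono (fun j _ => hUu j) hy)).le
  calc b < c := hbc
    _ ≤ symmApprox f e (k + 1) x :=
      hc.trans (ENNReal.coe_le_coe.2 (boxStep_le_symmApprox k.lt_succ_self 1 x))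
    _ ≤ ⨆ n, (symmApprox f e n x : ℝ≥0∞) :=
      le_iSup (fun n => (symmApprox f e n x : ℝ≥0∞)) (k + 1)

end SymmApprox

namespace Elementary

variable {N : ℕ} {f g : (Fin N → E3) → ℝ}

theorem of_fintype {ι : Type*} [Fintype ι] (a : ι → ℝ) (A : ι → Fin N → Set E3)
    (hA : ∀ i j, MeasurableSet (A i j)) :
    Elementary N fun x => ∑ i, a i * ∏ j, (A i j).indicator (fun _ => (1 : ℝ)) (x j) := by
  let e := Fintype.equivFin ι
  exact ⟨_, a ∘ e.symm, A ∘ e.symm, fun i j => hA _ j,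
    fun x => (e.symm.sum_comp fun i => a i * ∏ j, (A i j).indicator _ (x j)).symm⟩

theorem const (c : ℝ) : Elementary N fun _ => c :=
  ⟨1, fun _ => c, fun _ _ => Set.univ, fun _ _ => .univ, fun x => by simp⟩

theorem add (hf : Elementary N f) (hg : Elementary N g) : Elementary N (f + g) := by
  obtain ⟨k, a, A, hA, hf⟩ := hf
  obtain ⟨l, b, B, hB, hg⟩ := hg
  obtain rfl := funext hf
  obtain rfl := funext hg
  convert of_fintype (Sum.elim a b) (Sum.elim A B) (by rintro (i | i) <;> simp [hA, hB]) using 1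
  ext x
  simp [Fintype.sum_sum_type]

theorem mul (hf : Elementary N f) (hg : Elementary N g) : Elementary N (f * g) := by
  obtain ⟨k, a, A, hA, hf⟩ := hf
  obtain ⟨l, b, B, hB, hg⟩ := hg
  obtain rfl := funext hf
  obtain rfl := funext hg
  convert of_fintype (fun i : Fin k × Fin l => a i.1 * b i.2) (fun i j => A i.1 j ∩ B i.2 j)
    fun i j => (hA _ j).inter (hB _ j) using 2 with x
  simp only [Pi.mul_apply, Finset.sum_mul_sum, Fintype.sum_prod_type,
    Finset.prod_indicator_one_apply_eq_indicator_pi, Set.pi_inter_distrib, Set.inter_indicator_one]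
  exact Finset.sum_congr rfl fun _ _ => Finset.sum_congr rfl fun _ _ => by ring

theorem finite_range (hf : Elementary N f) : (Set.range f).Finite := by
  classical
  obtain ⟨k, a, A, -, hf⟩ := hf
  refine (Set.finite_range fun s : Finset (Fin k) => ∑ i ∈ s, a i).subset ?_
  rintro _ ⟨x, rfl⟩
  refine ⟨Finset.univ.filter fun i => x ∈ Set.univ.pi (A i), ?_⟩
  simp only [hf, Finset.sum_filter, Finset.prod_indicator_one_apply_eq_indicator_pi]
  simp [Set.indicator_apply]

theorem comp_perm (hf : Elementary N f) (σ : Equiv.Perm (Fin N)) :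
    Elementary N fun x => f (x ∘ σ) := by
  obtain ⟨k, a, A, hA, hf⟩ := hf
  refine ⟨k, a, fun i j => A i (σ.symm j), fun i j => hA i _, fun x => ?_⟩
  simp only [hf, Function.comp_apply]
  refine Finset.sum_congr rfl fun i _ => congrArg _ ?_
  simpa using Equiv.prod_comp σ fun j => (A i (σ.symm j)).indicator (fun _ => (1 : ℝ)) (x j)

theorem indicator_pi {A : Fin N → Set E3} (hA : ∀ j, MeasurableSet (A j)) (c : ℝ) :
    Elementary N ((Set.univ.pi A).indicator fun _ => c) :=
  ⟨1, fun _ => c, fun _ => A, fun _ => hA, fun x => by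
    by_cases hx : x ∈ Set.univ.pi A <;> simp [Finset.prod_indicator_one_apply_eq_indicator_pi, hx]⟩

end Elementary

def elementarySubalgebra (N : ℕ) : Subalgebra ℝ ((Fin N → E3) → ℝ) where
  carrier := {f | Elementary N f}
  mul_mem' := Elementary.mul
  add_mem' := Elementary.add
  algebraMap_mem' := Elementary.const

namespace Elementary

variable {N : ℕ} {f g : (Fin N → E3) → ℝ}

theorem comp (hf : Elementary N f) (φ : ℝ → ℝ) : Elementary N (φ ∘ f) := by
  classical
  set p := Lagrange.interpolate hf.finite_range.toFinset id φ
  have hp : φ ∘ f = Polynomial.aeval f p := by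
    ext x
    rw [Polynomial.aeval_pi_apply₂, Polynomial.coe_aeval_eq_eval]
    exact (Lagrange.eval_interpolate_at_node φ (Set.injOn_id _) (by simp)).symm
  rw [hp]
  exact Algebra.adjoin_le (R := ℝ) (S := elementarySubalgebra N) (Set.singleton_subset_iff.2 hf)
    (Polynomial.aeval_mem_adjoin_singleton ℝ f)

theorem sup (hf : Elementary N f) (hg : Elementary N g) : Elementary N (f ⊔ g) := by
  have h : f ⊔ g = f + (fun t => max t 0) ∘ (g - f) := by
    ext x
    simp only [Pi.sup_apply, Pi.add_apply, Function.comp_apply, Pi.sub_apply]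
    rw [← max_add_add_left, add_sub_cancel, add_zero, max_comm]
  rw [h]
  exact hf.add (((elementarySubalgebra N).sub_mem hg hf).comp _)

theorem finset_sup {ι : Type*} (s : Finset ι) {g : ι → (Fin N → E3) → ℝ≥0}
    (hg : ∀ i ∈ s, Elementary N fun x => (g i x : ℝ)) :
    Elementary N fun x => ((s.sup fun i => g i x : ℝ≥0) : ℝ) := by
  induction s using Finset.cons_induction with
  | empty => simpa using const 0
  | cons i s hi ih =>
    simp only [Finset.sup_cons, NNReal.coe_max]
    exact (hg i (Finset.mem_cons_self i s)).sup (ih fun j hj => hg j (Finset.mem_cons_of_mem hj))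

end Elementary

theorem elementary_symmApprox {N : ℕ} {f : (Fin N → E3) → ℝ≥0∞} {e : ℕ → (Fin N → Set E3) × ℕ}
    (he : ∀ k j, MeasurableSet ((e k).1 j)) (n : ℕ) :
    Elementary N fun x => (symmApprox f e n x : ℝ) :=
  Elementary.finset_sup _ fun q _ => by
    simpa [boxStep, NNReal.coe_indicator] using
      (Elementary.indicator_pi (he q.1) _).comp_perm q.2

theorem coulomb_comp_perm (N : ℕ) (σ : Equiv.Perm (Fin N)) (x : Fin N → E3) :
    coulomb N (x ∘ σ) = coulomb N x :=
  Finset.sum_filter_lt_comp_perm (fun i j => (ENNReal.ofReal (dist (x i) (x j)))⁻¹)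
    (fun i j => by rw [dist_comm]) σ

theorem continuous_coulomb (N : ℕ) : Continuous (coulomb N) :=
  continuous_finsetSum _ fun p _ => (ENNReal.continuous_ofReal.comp
    ((continuous_apply p.1).dist (continuous_apply p.2))).inv

theorem stmt2_general (N : ℕ) :
    ∃ c_n : ℕ → (Fin N → E3) → ℝ,
      (∀ n x, 0 ≤ c_n n x) ∧
      (∀ n, LowerSemicontinuous (c_n n)) ∧
      (∀ n (σ : Equiv.Perm (Fin N)) (x : Fin N → E3), c_n n (x ∘ σ) = c_n n x) ∧
      (∀ n, Elementary N (c_n n)) ∧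
      (∀ n x, ENNReal.ofReal (c_n n x) ≤ coulomb N x) ∧
      (∀ x, Monotone fun n => c_n n x) ∧
      (∀ x, Tendsto (fun n => ENNReal.ofReal (c_n n x)) atTop (𝓝 (coulomb N x))) := by
  obtain ⟨B, e, hB, heB, hsurj⟩ := exists_isTopologicalBasis_seq_boxes (Fin N) E3
  have hopen k j : IsOpen ((e k).1 j) := hB.isOpen (heB k j)
  have hperm := coulomb_comp_perm N
  refine ⟨fun n x => symmApprox (coulomb N) e n x, fun n x => NNReal.coe_nonneg _,
    fun n => NNReal.continuous_coe.comp_lowerSemicontinuous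
      (lowerSemicontinuous_symmApprox hopen n) NNReal.coe_mono,
    fun n σ x => congrArg _ (symmApprox_comp_perm n σ x),
    fun n => elementary_symmApprox (fun k j => (hopen k j).measurableSet) n,
    fun n x => by simpa using coe_symmApprox_le hperm n x,
    fun x => NNReal.coe_mono.comp (monotone_symmApprox x), fun x => ?_⟩
  simp only [ENNReal.ofReal_coe_nnreal]
  rw [← iSup_symmApprox hB hsurj (continuous_coulomb N).lowerSemicontinuous hperm x]
  exact tendsto_atTop_iSup (ENNReal.coe_mono.comp (monotone_symmApprox x))

/-- there is a nondecreasing sequence of nonnegative lower semicontinuous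
permutation-invariant elementary costs increasing pointwise to the Coulomb cost. -/
theorem stmt2 (N : ℕ) (hN : 2 ≤ N) :
    ∃ c_n : ℕ → (Fin N → E3) → ℝ,
      (∀ n x, 0 ≤ c_n n x) ∧
      (∀ n, LowerSemicontinuous (c_n n)) ∧
      (∀ n (σ : Equiv.Perm (Fin N)) (x : Fin N → E3), c_n n (x ∘ σ) = c_n n x) ∧
      (∀ n, Elementary N (c_n n)) ∧
      (∀ n x, ENNReal.ofReal (c_n n x) ≤ coulomb N x) ∧
      (∀ x, Monotone fun n => c_n n x) ∧
      (∀ x, Tendsto (fun n => ENNReal.ofReal (c_n n x)) atTop (𝓝 (coulomb N x))) :=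
  stmt2_general N
end
end

section
/- Let (F_n) be a sequence of functions X → ℝ̄ on a metric space X that Γ-converges to F, and suppose there is a nonempty compact set K ⊆ X such that inf_X F_n = inf_K F_n for all n. Then F attains a minimum on X, and inf_X F_n converges to min_X F. Moreover, if (x_n) satisfies lim_n F_n(x_n) = lim_n inf_X F_n and a subsequence of (x_n) converges to some x, then F(x) = inf_X F. -/
open Filter Topology

/-!
Write `m n = inf F_n`. The recovery sequences give `limsup m ≤ inf F`. Conversely, along a
subsequence realising `liminf m` one picks near-minimisers of `F_n` in `K`; a further subsequence
converges to some `x₀ ∈ K`, and the Γ-liminf inequality (which passes to subsequences) gives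
`F x₀ ≤ liminf m`. Hence `F x₀ ≤ liminf m ≤ limsup m ≤ inf F ≤ F x₀`, so all these agree.
The same liminf inequality along a subsequence handles cluster points of minimising sequences.
-/

lemma limsup_iInf_le_iInf {X β : Type*} [CompleteLattice β] {F : ℕ → X → β} {Flim : X → β}
    (hlimsup : ∀ x : X, ∃ s : ℕ → X, limsup (fun n => F n (s n)) atTop ≤ Flim x) :
    limsup (fun n => ⨅ x, F n x) atTop ≤ ⨅ x, Flim x := by
  refine le_iInf fun x => ?_
  obtain ⟨s, hs⟩ := hlimsup x
  exact (limsup_le_limsup (.of_forall fun n => iInf_le _ (s n))).trans hs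

lemma tendsto_extend_of_strictMono {X : Type*} [TopologicalSpace X] {σ : ℕ → ℕ}
    (hσ : StrictMono σ) {y : ℕ → X} {x : X}
    (hy : Tendsto y atTop (𝓝 x)) : Tendsto (Function.extend σ y fun _ => x) atTop (𝓝 x) := by
  rw [tendsto_atTop'] at hy ⊢
  intro U hU
  obtain ⟨N, hN⟩ := hy U hU
  refine ⟨σ N, fun n hn => ?_⟩
  by_cases hrange : ∃ k, σ k = n
  · obtain ⟨k, rfl⟩ := hrange
    rw [hσ.injective.extend_apply]
    exact hN k (hσ.le_iff_le.mp hn)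
  · rw [Function.extend_apply' _ _ _ hrange]
    exact mem_of_mem_nhds hU

lemma le_liminf_comp_of_strictMono {X β : Type*} [TopologicalSpace X] [CompleteLattice β]
    {F : ℕ → X → β} {Flim : X → β}
    (hliminf : ∀ (x : X) (s : ℕ → X), Tendsto s atTop (𝓝 x) →
      Flim x ≤ liminf (fun n => F n (s n)) atTop)
    {σ : ℕ → ℕ} (hσ : StrictMono σ) {y : ℕ → X} {x : X} (hy : Tendsto y atTop (𝓝 x)) :
    Flim x ≤ liminf (fun k => F (σ k) (y k)) atTop := by
  set s := Function.extend σ y fun _ => x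
  calc Flim x ≤ liminf (fun n => F n (s n)) atTop :=
        hliminf x s (tendsto_extend_of_strictMono hσ hy)
    _ ≤ liminf (fun k => F (σ k) (s (σ k))) atTop := hσ.tendsto_atTop.liminf_le_liminf_comp
    _ = liminf (fun k => F (σ k) (y k)) atTop := by simp only [s, hσ.injective.extend_apply]

lemma exists_mem_le_liminf_iInf {X β : Type*} [TopologicalSpace X] [CompleteLinearOrder β]
    [TopologicalSpace β] [OrderTopology β] [DenselyOrdered β] [FirstCountableTopology β]
    {F : ℕ → X → β} {Flim : X → β}
    (hliminf : ∀ (x : X) (s : ℕ → X), Tendsto s atTop (𝓝 x) →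
      Flim x ≤ liminf (fun n => F n (s n)) atTop)
    {K : Set X} (hK : IsSeqCompact K) (hKne : K.Nonempty)
    (hcoer : ∀ n, (⨅ x, F n x) = ⨅ x ∈ K, F n x) :
    ∃ x₀ ∈ K, Flim x₀ ≤ liminf (fun n => ⨅ x, F n x) atTop := by
  set ℓ := liminf (fun n => ⨅ x, F n x) atTop
  rcases (le_top : ℓ ≤ ⊤).eq_or_lt with hℓ | hℓ
  · exact ⟨hKne.some, hKne.some_mem, hℓ ▸ le_top⟩
  obtain ⟨u, -, hℓu, hu⟩ := exists_seq_strictAnti_tendsto' hℓ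
  obtain ⟨φ, hφ, hφu⟩ := extraction_forall_of_frequently fun k =>
    frequently_lt_of_liminf_lt (h := (hℓu k).1)
  have hnear : ∀ k, ∃ y ∈ K, F (φ k) y < u k := by
    intro k
    simpa only [hcoer, iInf_lt_iff, exists_prop] using hφu k
  choose y hyK hyu using hnear
  obtain ⟨x₀, hx₀K, ψ, hψ, hyψ⟩ := hK hyK
  refine ⟨x₀, hx₀K, ?_⟩
  calc Flim x₀ ≤ liminf (fun k => F (φ (ψ k)) (y (ψ k))) atTop :=
        le_liminf_comp_of_strictMono hliminf (hφ.comp hψ) hyψ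
    _ ≤ liminf (fun k => u (ψ k)) atTop := liminf_le_liminf (.of_forall fun k => (hyu (ψ k)).le)
    _ = ℓ := (hu.comp hψ.tendsto_atTop).liminf_eq

/-- the fundamental theorem of Γ-convergence with equi-mild coercivity:
the limit functional attains its minimum, the infima converge to the minimum, and
every cluster point of an asymptotically minimizing sequence is a minimizer. -/
theorem stmt4 {X : Type*} [MetricSpace X] (F : ℕ → X → EReal) (Flim : X → EReal)
    (hliminf : ∀ (x : X) (s : ℕ → X), Tendsto s atTop (𝓝 x) →
      Flim x ≤ liminf (fun n => F n (s n)) atTop)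
    (hlimsup : ∀ x : X, ∃ s : ℕ → X, Tendsto s atTop (𝓝 x) ∧
      limsup (fun n => F n (s n)) atTop ≤ Flim x)
    (K : Set X) (hK : IsCompact K) (hKne : K.Nonempty)
    (hcoer : ∀ n, (⨅ x, F n x) = ⨅ x ∈ K, F n x) :
    (∃ x₀, ∀ x, Flim x₀ ≤ Flim x) ∧
    Tendsto (fun n => ⨅ x, F n x) atTop (𝓝 (⨅ x, Flim x)) ∧
    (∀ (x : ℕ → X) (L : EReal), Tendsto (fun n => F n (x n)) atTop (𝓝 L) →
      Tendsto (fun n => ⨅ z, F n z) atTop (𝓝 L) →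
      ∀ (φ : ℕ → ℕ) (x₀ : X), StrictMono φ → Tendsto (x ∘ φ) atTop (𝓝 x₀) →
        Flim x₀ = ⨅ z, Flim z) := by
  have hupper := limsup_iInf_le_iInf fun x => (hlimsup x).imp fun _ => And.right
  obtain ⟨x₀, -, hx₀⟩ := exists_mem_le_liminf_iInf hliminf hK.isSeqCompact hKne hcoer
  have hmin : Flim x₀ = ⨅ x, Flim x :=
    le_antisymm (hx₀.trans ((liminf_le_limsup).trans hupper)) (iInf_le _ _)
  have hconv : Tendsto (fun n => ⨅ x, F n x) atTop (𝓝 (⨅ x, Flim x)) :=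
    tendsto_of_le_liminf_of_limsup_le (hmin ▸ hx₀) hupper
  refine ⟨⟨x₀, fun x => hmin ▸ iInf_le Flim x⟩, hconv, ?_⟩
  intro x L hxL hmL φ x₁ hφ hxφ
  refine le_antisymm ?_ (iInf_le _ _)
  calc Flim x₁ ≤ liminf (fun k => F (φ k) (x (φ k))) atTop :=
        le_liminf_comp_of_strictMono hliminf hφ hxφ
    _ = L := (hxL.comp hφ.tendsto_atTop).liminf_eq
    _ = ⨅ z, Flim z := tendsto_nhds_unique hmL hconv
end

section
/- Let ρ be a Borel probability measure on ℝ³ that is not concentrated on a set of at most N−1 points, and let c(x₁,…,x_N) = Σ_{1≤i<j≤N} 1/|x_i−x_j| be the Coulomb cost. If u ∈ L¹(ρ) satisfies u(x₁) + ⋯ + u(x_N) ≤ c(x₁,…,x_N) for ρ^N-almost every (x₁,…,x_N), then there exists a constant k ∈ ℝ such that u ≤ k ρ-almost everywhere. -/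
/-!
Choose points `y₁, …, y_N` of the support of `ρ` (it carries full mass, so it has at least `N`
points) at mutual distances `≥ δ`. Every point of `ℝ³` is at distance `≥ δ/2` from all the `y_j`
but at most one, say all `j ≠ i`, and near each `y_j` the function `-u` is bounded by some `M_j` on
a set of positive mass. If `u > k` on a set of positive mass of such points, the product of that
set with these neighbourhoods of the `y_j` has positive `ρ^N`-mass; on it all pairwise distances
are `≥ δ/4`, so the Coulomb cost is at most `4N²/δ`, while `∑ u(x_j) > k - ∑ M_j`. Hence
`k = 4N²/δ + ∑ M_j` bounds `u` almost everywhere.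
-/

open MeasureTheory Filter Topology
open scoped ENNReal

noncomputable section

open Metric Set

theorem exists_pos_le_dist_of_injective {α ι : Type*} [MetricSpace α] [Finite ι] {y : ι → α}
    (hy : Function.Injective y) : ∃ δ > 0, ∀ i j, i ≠ j → δ ≤ dist (y i) (y j) := by
  have hsep : ∀ p : ι × ι, ∀ᶠ δ in 𝓝[>] (0 : ℝ), p.1 ≠ p.2 → δ ≤ dist (y p.1) (y p.2) :=
    fun p => by
      by_cases hp : p.1 = p.2
      · simp [hp]
      · filter_upwards [Ioo_mem_nhdsGT (dist_pos.2 (hy.ne hp))] with δ hδ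
        exact fun _ => hδ.2.le
  obtain ⟨δ, hδ, hδy⟩ := (eventually_mem_nhdsWithin.and (eventually_all.2 hsep)).exists
  exact ⟨δ, hδ, fun i j hij => hδy (i, j) hij⟩

theorem exists_forall_ne_half_le_dist {α ι : Type*} [MetricSpace α] [Nonempty ι] {y : ι → α}
    {δ : ℝ} (hy : ∀ i j, i ≠ j → δ ≤ dist (y i) (y j)) (x : α) :
    ∃ i, ∀ j ≠ i, δ / 2 ≤ dist x (y j) := by
  by_cases h : ∃ i, dist x (y i) < δ / 2
  · obtain ⟨i, hi⟩ := h
    refine ⟨i, fun j hj => ?_⟩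
    linarith [hy j i hj, dist_triangle_left (y j) (y i) x]
  · simp only [not_exists, not_lt] at h
    exact ⟨Classical.arbitrary ι, fun j _ => h j⟩

theorem le_dist_of_near_separated {α ι : Type*} [MetricSpace α] {y x : ι → α} {δ : ℝ}
    (hy : ∀ j k, j ≠ k → δ ≤ dist (y j) (y k)) {i : ι}
    (hxi : ∀ j ≠ i, δ / 2 ≤ dist (x i) (y j)) (hx : ∀ j ≠ i, dist (x j) (y j) < δ / 4) :
    ∀ j k, j ≠ k → δ / 4 ≤ dist (x j) (x k) := by
  have hfar : ∀ j k, j ≠ k → k ≠ i → δ / 4 ≤ dist (x j) (x k) := by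
    intro j k hjk hk
    by_cases hj : j = i
    · subst hj
      linarith [hxi k hk, hx k hk, dist_triangle (x j) (x k) (y k)]
    · linarith [hy j k hjk, hx j hj, hx k hk, dist_triangle4 (y j) (x j) (x k) (y k),
        dist_comm (y j) (x j), dist_nonneg (x := x j) (y := x k)]
  intro j k hjk
  by_cases hk : k = i
  · rw [dist_comm]
    exact hfar k j hjk.symm (hk ▸ hjk)
  · exact hfar j k hjk hk

theorem MeasureTheory.Measure.exists_embedding_support {X : Type*} [TopologicalSpace X]
    [HereditarilyLindelofSpace X] [MeasurableSpace X] (ρ : Measure X) [IsProbabilityMeasure ρ]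
    {N : ℕ} (hρ : ∀ S : Finset X, ρ S = 1 → N ≤ S.card) : Nonempty (Fin N ↪ ρ.support) := by
  suffices hN : (N : ℕ∞) ≤ ρ.support.encard by
    obtain ⟨y, -⟩ := Fin.Embedding.exists_embedding_disjoint_range_of_add_le_ENat_card
      (s := (∅ : Set ρ.support)) (n := N) (by simpa using hN)
    exact ⟨y⟩
  by_contra! hlt
  have hfin : ρ.support.Finite := finite_of_encard_le_coe hlt.le
  have hS : ρ hfin.toFinset = 1 := by
    rw [hfin.coe_toFinset, ← prob_compl_eq_zero_iff₀ Measure.nullMeasurableSet_support]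
    exact Measure.measure_compl_support
  rw [hfin.encard_eq_coe_toFinset_card, Nat.cast_lt] at hlt
  exact hlt.not_ge (hρ _ hS)

theorem MeasureTheory.exists_nat_measure_inter_le_pos {α : Type*} [MeasurableSpace α]
    {μ : Measure α} {s : Set α} (hs : 0 < μ s) (f : α → ℝ) :
    ∃ n : ℕ, 0 < μ (s ∩ {x | f x ≤ n}) := by
  refine exists_measure_pos_of_not_measure_iUnion_null (ne_of_gt ?_)
  have hcover : s ⊆ ⋃ n : ℕ, s ∩ {x | f x ≤ n} := fun x hx =>
    mem_iUnion.2 ((exists_nat_ge (f x)).imp fun _ hn => ⟨hx, hn⟩)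
  exact hs.trans_le (measure_mono hcover)

theorem MeasureTheory.Measure.exists_mem_pi_of_ae {ι : Type*} [Fintype ι] {α : ι → Type*}
    [∀ i, MeasurableSpace (α i)] {μ : ∀ i, Measure (α i)} [∀ i, SigmaFinite (μ i)]
    {P : (∀ i, α i) → Prop} (hP : ∀ᵐ x ∂Measure.pi μ, P x) {s : ∀ i, Set (α i)}
    (hs : ∀ i, μ i (s i) ≠ 0) : ∃ x ∈ univ.pi s, P x := by
  by_contra! h
  have hpi : Measure.pi μ (univ.pi s) ≠ 0 := by
    rw [Measure.pi_pi]
    exact Finset.prod_ne_zero_iff.2 fun i _ => hs i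
  exact hpi (measure_mono_null (fun x hx => h x hx) (ae_iff.1 hP))

theorem coulomb_le_of_le_dist {N : ℕ} {x : Fin N → E3} {r : ℝ} (hr : 0 < r)
    (hx : ∀ i j, i ≠ j → r ≤ dist (x i) (x j)) :
    coulomb N x ≤ ENNReal.ofReal (N ^ 2 / r) := by
  have hterm : ∀ p ∈ Finset.univ.filter (fun p : Fin N × Fin N => p.1 < p.2),
      (ENNReal.ofReal (dist (x p.1) (x p.2)))⁻¹ ≤ ENNReal.ofReal r⁻¹ := fun p hp => by
    rw [ENNReal.ofReal_inv_of_pos hr]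
    exact ENNReal.inv_le_inv' (ENNReal.ofReal_le_ofReal (hx _ _ (Finset.mem_filter.1 hp).2.ne))
  calc coulomb N x ≤ (Finset.univ.filter (fun p : Fin N × Fin N => p.1 < p.2)).card •
        ENNReal.ofReal r⁻¹ := Finset.sum_le_card_nsmul _ _ _ hterm
    _ ≤ (Fintype.card (Fin N × Fin N)) • ENNReal.ofReal r⁻¹ :=
        nsmul_le_nsmul_left zero_le (Finset.card_le_univ _)
    _ = ENNReal.ofReal (N ^ 2 / r) := by
        rw [nsmul_eq_mul, ← ENNReal.ofReal_natCast, ← ENNReal.ofReal_mul (by positivity)]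
        simp [sq, div_eq_mul_inv]

theorem measure_far_inter_gt_eq_zero {N : ℕ} {ρ : Measure E3} [SigmaFinite ρ] {u : E3 → ℝ}
    (hcon : ∀ᵐ x ∂(Measure.pi fun _ : Fin N => ρ),
      ENNReal.ofReal (∑ i, u (x i)) ≤ coulomb N x)
    {y : Fin N → E3} {δ : ℝ} (hδ : 0 < δ) (hy : ∀ i j, i ≠ j → δ ≤ dist (y i) (y j))
    {M : Fin N → ℕ} (hM : ∀ j, 0 < ρ (ball (y j) (δ / 4) ∩ {z | -u z ≤ M j})) (i : Fin N) :
    ρ ({z | ∀ j ≠ i, δ / 2 ≤ dist z (y j)} ∩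
      {z | N ^ 2 / (δ / 4) + ∑ j, (M j : ℝ) < u z}) = 0 := by
  set k := N ^ 2 / (δ / 4) + ∑ j, (M j : ℝ) with hk_def
  by_contra hpos
  obtain ⟨x, hx, hxcon⟩ := Measure.exists_mem_pi_of_ae hcon
    (s := Function.update (fun j => ball (y j) (δ / 4) ∩ {z | -u z ≤ M j}) i
      ({z | ∀ j ≠ i, δ / 2 ≤ dist z (y j)} ∩ {z | k < u z}))
    (fun j => by
      rcases eq_or_ne j i with rfl | hj
      · simpa using hpos
      · simpa [hj] using (hM j).ne')
  have hxi : (∀ j ≠ i, δ / 2 ≤ dist (x i) (y j)) ∧ k < u (x i) := by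
    simpa using hx i (mem_univ i)
  have hxj : ∀ j ≠ i, dist (x j) (y j) < δ / 4 ∧ -u (x j) ≤ M j := fun j hj => by
    simpa [hj] using hx j (mem_univ j)
  have hsum : ∑ j, u (x j) ≤ N ^ 2 / (δ / 4) := by
    have hcoul := coulomb_le_of_le_dist (by positivity)
      (le_dist_of_near_separated hy hxi.1 fun j hj => (hxj j hj).1)
    exact (ENNReal.ofReal_le_ofReal_iff (by positivity)).1 (hxcon.trans hcoul)
  have hk : 0 ≤ k := by positivity
  have hshift : ∀ j, 0 ≤ u (x j) + M j := fun j => by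
    rcases eq_or_ne j i with rfl | hj
    · linarith [hxi.2, (M j).cast_nonneg (α := ℝ)]
    · linarith [(hxj j hj).2]
  have hlower : u (x i) ≤ ∑ j, u (x j) + ∑ j, (M j : ℝ) := by
    rw [← Finset.sum_add_distrib]
    calc u (x i) ≤ u (x i) + M i := le_add_of_nonneg_right (Nat.cast_nonneg _)
      _ ≤ ∑ j, (u (x j) + M j) := Finset.single_le_sum (fun j _ => hshift j) (Finset.mem_univ i)
  linarith [hxi.2, hk_def]

theorem stmt6_general (N : ℕ) (hN : 2 ≤ N) (ρ : Measure E3) [IsProbabilityMeasure ρ]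
    (hnc : ¬ ∃ S : Finset E3, S.card ≤ N - 1 ∧ ρ ↑S = 1)
    (u : E3 → ℝ)
    (hcon : ∀ᵐ x ∂(Measure.pi fun _ : Fin N => ρ),
      ENNReal.ofReal (∑ i, u (x i)) ≤ coulomb N x) :
    ∃ k : ℝ, ∀ᵐ x ∂ρ, u x ≤ k := by
  obtain ⟨y⟩ := ρ.exists_embedding_support (N := N) fun S hS => by
    by_contra! hlt
    exact hnc ⟨S, by omega, hS⟩
  obtain ⟨δ, hδ, hyδ⟩ := exists_pos_le_dist_of_injective (Subtype.val_injective.comp y.injective)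
  have hball : ∀ j, 0 < ρ (ball (y j) (δ / 4)) := fun j =>
    (Measure.mem_support_iff_forall _).1 (y j).2 _ (ball_mem_nhds _ (by positivity))
  choose M hM using fun j => exists_nat_measure_inter_le_pos (hball j) (fun z => -u z)
  have : Nonempty (Fin N) := ⟨⟨0, by omega⟩⟩
  refine ⟨N ^ 2 / (δ / 4) + ∑ j, (M j : ℝ), ae_iff.2 ?_⟩
  refine measure_mono_null (fun z hz => ?_)
    (measure_iUnion_null (measure_far_inter_gt_eq_zero hcon hδ hyδ hM))
  obtain ⟨i, hi⟩ := exists_forall_ne_half_le_dist hyδ z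
  exact mem_iUnion.2 ⟨i, hi, lt_of_not_ge hz⟩

/-- if ρ is not concentrated on at most N−1 points and u ∈ L¹(ρ) satisfies the
Kantorovich dual constraint for the Coulomb cost ρ^N-a.e., then u is bounded above ρ-a.e. -/
theorem stmt6 (N : ℕ) (hN : 2 ≤ N) (ρ : Measure E3) [IsProbabilityMeasure ρ]
    (hnc : ¬ ∃ S : Finset E3, S.card ≤ N - 1 ∧ ρ ↑S = 1)
    (u : E3 → ℝ) (hu : Integrable u ρ)
    (hcon : ∀ᵐ x ∂(Measure.pi fun _ : Fin N => ρ),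
      ENNReal.ofReal (∑ i, u (x i)) ≤ coulomb N x) :
    ∃ k : ℝ, ∀ᵐ x ∂ρ, u x ≤ k :=
  stmt6_general N hN ρ hnc u hcon
end
end

section
/- Let X₁,…,X_N be finite sets, ρᵢ a probability measure on Xᵢ for each i, and c̃ : X₁×⋯×X_N → ℝ. Then the minimum of ∫ c̃ dγ over probability measures γ on X₁×⋯×X_N with i-th marginal ρᵢ for every i equals the maximum of Σᵢ Σ_{x∈Xᵢ} uᵢ(x) ρᵢ({x}) over tuples of functions uᵢ : Xᵢ → ℝ satisfying u₁(x₁)+⋯+u_N(x_N) ≤ c̃(x₁,…,x_N) for all (x₁,…,x_N), and both the minimum and the maximum are attained. -/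
/-!
The transport problem is a finite linear program. Let `A` be the 0/1 matrix whose row `x` marks
the points `⟨i, x i⟩`: couplings are the `γ ≥ 0` with `γ ᵥ* A = ρ`, and admissible potentials
are the `u` with `A *ᵥ u ≤ c`, so weak duality is `u ⬝ᵥ ρ = γ ⬝ᵥ (A *ᵥ u) ≤ γ ⬝ᵥ c`.
The couplings form a compact set containing the product measure, so an optimal `γ` exists.
If no potential reached its cost `p`, Farkas' lemma would give `(μ, s) ≥ 0` with `μ ᵥ* A = s • ρ`
and `μ ⬝ᵥ c < s * p`; then `(γ + μ) / (1 + s)` would be a cheaper coupling. Farkas' lemma is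
Hahn–Banach separation from a finitely generated cone, which is closed because, by
Carathéodory's argument, it is a finite union of images of orthants under injective linear maps.
-/

open Finset

lemma exists_nonneg_sub_smul_eq_zero {ι : Type*} [Fintype ι] {t g : ι → ℝ} (ht : 0 ≤ t)
    (hg : ∃ j, 0 < g j) : ∃ i, ∃ a : ℝ, 0 ≤ t - a • g ∧ (t - a • g) i = 0 := by
  classical
  obtain ⟨j, hj⟩ := hg
  obtain ⟨i, hi, hmin⟩ := (univ.filter fun k ↦ 0 < g k).exists_min_image (fun k ↦ t k / g k)
    ⟨j, by simpa using hj⟩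
  simp only [mem_filter, mem_univ, true_and] at hi hmin
  refine ⟨i, t i / g i, fun k ↦ ?_, by simp [div_mul_cancel₀ _ hi.ne']⟩
  simp only [Pi.zero_apply, Pi.sub_apply, Pi.smul_apply, smul_eq_mul, sub_nonneg]
  rcases lt_or_ge 0 (g k) with hk | hk
  · exact (le_div_iff₀ hk).1 (hmin k hk)
  · exact (mul_nonpos_of_nonneg_of_nonpos (div_nonneg (ht i) hi.le) hk).trans (ht k)

namespace PointedCone

variable {E : Type*} [AddCommGroup E] [Module ℝ E] {ι : Type*} [Fintype ι]

lemma mem_hull_range_iff {v : ι → E} {x : E} :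
    x ∈ hull ℝ (Set.range v) ↔ ∃ t : ι → ℝ, 0 ≤ t ∧ ∑ i, t i • v i = x := by
  rw [Submodule.mem_span_range_iff_exists_fun]
  exact ⟨fun ⟨c, hc⟩ ↦ ⟨fun i ↦ c i, fun i ↦ (c i).2, hc⟩,
    fun ⟨t, ht, hx⟩ ↦ ⟨fun i ↦ ⟨t i, ht i⟩, hx⟩⟩

lemma hull_range_eq_iUnion_of_not_linearIndependent [DecidableEq ι] {v : ι → E}
    (hv : ¬ LinearIndependent ℝ v) :
    (hull ℝ (Set.range v) : Set E) = ⋃ i, hull ℝ (Set.range fun j : {j // j ≠ i} ↦ v j.1) := by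
  refine subset_antisymm (fun x hx ↦ ?_)
    (Set.iUnion_subset fun i ↦ Submodule.span_mono (Set.range_comp_subset_range _ v))
  obtain ⟨t, ht, rfl⟩ := mem_hull_range_iff.1 hx
  obtain ⟨g, hg, hpos⟩ : ∃ g : ι → ℝ, ∑ i, g i • v i = 0 ∧ ∃ j, 0 < g j := by
    obtain ⟨g, hg, j, hj⟩ := Fintype.not_linearIndependent_iff.1 hv
    rcases hj.lt_or_gt with hj | hj
    · exact ⟨-g, by simp [hg], j, by simpa using hj⟩
    · exact ⟨g, hg, j, hj⟩
  obtain ⟨i, a, hs, hsi⟩ := exists_nonneg_sub_smul_eq_zero ht hpos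
  refine Set.mem_iUnion.2 ⟨i, mem_hull_range_iff.2 ⟨fun j ↦ (t - a • g) j, fun j ↦ hs j, ?_⟩⟩
  have : ∑ j, (t - a • g) j • v j = ∑ j, t j • v j := by
    simp [sub_smul, sum_sub_distrib, mul_smul, ← smul_sum, hg]
  rw [← this, Fintype.sum_eq_add_sum_subtype_ne _ i, hsi, zero_smul, zero_add]

variable [TopologicalSpace E] [IsTopologicalAddGroup E] [ContinuousSMul ℝ E] [T2Space E]

lemma isClosed_hull_range_of_linearIndependent {v : ι → E} (hv : LinearIndependent ℝ v) :
    IsClosed (hull ℝ (Set.range v) : Set E) := by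
  have hemb := LinearMap.isClosedEmbedding_of_injective (LinearMap.ker_eq_bot.2
    (linearIndependent_iff_injective_fintypeLinearCombination.1 hv))
  convert hemb.isClosedMap _ (isClosed_Ici (a := (0 : ι → ℝ)))
  ext x
  simp [mem_hull_range_iff, Fintype.linearCombination_apply]

theorem isClosed_hull_range (v : ι → E) : IsClosed (hull ℝ (Set.range v) : Set E) := by
  classical
  induction h : Fintype.card ι using Nat.strong_induction_on generalizing ι with
  | _ n ih =>
  by_cases hv : LinearIndependent ℝ v
  · exact isClosed_hull_range_of_linearIndependent hv
  rw [hull_range_eq_iUnion_of_not_linearIndependent hv]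
  exact isClosed_iUnion_of_finite fun i ↦
    ih _ (h ▸ Fintype.card_subtype_lt (p := (· ≠ i)) (not_not.2 rfl)) _ rfl

end PointedCone

namespace Matrix

variable {κ ι : Type*} [Fintype κ] [Fintype ι]

theorem exists_nonneg_vecMul_eq_or_exists_dotProduct_neg (M : Matrix κ ι ℝ) (z : ι → ℝ) :
    (∃ l, 0 ≤ l ∧ l ᵥ* M = z) ∨ ∃ y, 0 ≤ M *ᵥ y ∧ z ⬝ᵥ y < 0 := by
  classical
  by_cases hz : z ∈ PointedCone.hull ℝ (Set.range M)
  · obtain ⟨l, hl, hlz⟩ := PointedCone.mem_hull_range_iff.1 hz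
    exact Or.inl ⟨l, hl, by rw [vecMul_eq_sum, hlz]⟩
  let C : ProperCone ℝ (ι → ℝ) := ⟨_, PointedCone.isClosed_hull_range M⟩
  obtain ⟨f, hfC, hfz⟩ := C.hyperplane_separation_point hz
  set y : ι → ℝ := fun i ↦ f fun j ↦ if i = j then 1 else 0
  have hf (w : ι → ℝ) : f w = w ⬝ᵥ y := by
    simpa [dotProduct, y] using LinearMap.pi_apply_eq_sum_univ (f : (ι → ℝ) →ₗ[ℝ] ℝ) w
  refine Or.inr ⟨y, fun k ↦ ?_, by rwa [← hf]⟩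
  simpa [mulVec, ← hf] using hfC (M k) (PointedCone.subset_hull (Set.mem_range_self k))

theorem exists_mulVec_le_or_exists_nonneg_vecMul_eq_zero (M : Matrix κ ι ℝ) (d : κ → ℝ) :
    (∃ y, M *ᵥ y ≤ d) ∨ ∃ l, 0 ≤ l ∧ l ᵥ* M = 0 ∧ l ⬝ᵥ d < 0 := by
  -- homogenize: the extra coordinate `none` carries the right-hand side `d`
  let N : Matrix κ (Option ι) ℝ := fun k o ↦ o.elim (d k) (M k)
  rcases exists_nonneg_vecMul_eq_or_exists_dotProduct_neg N (fun o ↦ o.elim (-1) 0) with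
    ⟨l, hl, hlN⟩ | ⟨y, hy, hyz⟩
  · refine Or.inr ⟨l, hl, funext fun i ↦ congrFun hlN (some i), ?_⟩
    have : l ⬝ᵥ d = -1 := congrFun hlN none
    linarith
  · have hyz : 0 < y none := by simpa [dotProduct, Fintype.sum_option] using hyz
    refine Or.inl ⟨-(y none)⁻¹ • fun i ↦ y (some i), fun k ↦ ?_⟩
    have hk : 0 ≤ d k * y none + (M *ᵥ fun i ↦ y (some i)) k := by
      simpa [N, mulVec, dotProduct, Fintype.sum_option] using hy k
    calc (M *ᵥ -(y none)⁻¹ • fun i ↦ y (some i)) k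
        = d k - (y none)⁻¹ * (d k * y none + (M *ᵥ fun i ↦ y (some i)) k) := by
          rw [mulVec_smul, Pi.smul_apply, smul_eq_mul]
          field_simp
          ring
      _ ≤ d k := sub_le_self _ (mul_nonneg (inv_nonneg.2 hyz.le) hk)

theorem dotProduct_le_of_vecMul_eq {A : Matrix κ ι ℝ} {b : ι → ℝ} {c γ : κ → ℝ} {y : ι → ℝ}
    (hγ : 0 ≤ γ) (hγA : γ ᵥ* A = b) (hy : A *ᵥ y ≤ c) : y ⬝ᵥ b ≤ γ ⬝ᵥ c := by
  rw [dotProduct_comm, ← hγA, ← dotProduct_mulVec]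
  exact dotProduct_le_dotProduct_of_nonneg_left hy hγ

theorem exists_mulVec_le_dotProduct_eq_of_isMinOn {A : Matrix κ ι ℝ} {b : ι → ℝ} {c γ : κ → ℝ}
    (hγ : γ ∈ {γ | 0 ≤ γ ∧ γ ᵥ* A = b}) (hmin : IsMinOn (· ⬝ᵥ c) {γ | 0 ≤ γ ∧ γ ᵥ* A = b} γ) :
    ∃ y, A *ᵥ y ≤ c ∧ y ⬝ᵥ b = γ ⬝ᵥ c := by
  -- the extra row `none` encodes the objective bound `γ ⬝ᵥ c ≤ y ⬝ᵥ b`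
  let M : Matrix (Option κ) ι ℝ := fun o ↦ o.elim (-b) A
  let d : Option κ → ℝ := fun o ↦ o.elim (-(γ ⬝ᵥ c)) c
  rcases exists_mulVec_le_or_exists_nonneg_vecMul_eq_zero M d with
    ⟨y, hy⟩ | ⟨l, hl, hlA, hlc⟩
  · have hyA : A *ᵥ y ≤ c := fun k ↦ hy (some k)
    refine ⟨y, hyA, le_antisymm (dotProduct_le_of_vecMul_eq hγ.1 hγ.2 hyA) ?_⟩
    have : -b ⬝ᵥ y ≤ -(γ ⬝ᵥ c) := hy none
    rwa [neg_dotProduct, neg_le_neg_iff, dotProduct_comm b] at this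
  · exfalso
    set s := l none
    set μ : κ → ℝ := fun k ↦ l (some k)
    have hμA : μ ᵥ* A = s • b := funext fun i ↦ by
      have : (l ᵥ* M) i = s * -b i + (μ ᵥ* A) i := Fintype.sum_option _
      rw [hlA, Pi.zero_apply] at this
      rw [Pi.smul_apply, smul_eq_mul]
      linarith
    have hμc : μ ⬝ᵥ c < s * (γ ⬝ᵥ c) := by
      have : l ⬝ᵥ d = s * -(γ ⬝ᵥ c) + μ ⬝ᵥ c := Fintype.sum_option _
      linarith
    have hs : 0 < 1 + s := by linarith [show 0 ≤ s from hl none]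
    have hfeas : (1 + s)⁻¹ • (γ + μ) ∈ {γ | 0 ≤ γ ∧ γ ᵥ* A = b} := by
      refine ⟨smul_nonneg (inv_nonneg.2 hs.le) (add_nonneg hγ.1 fun k ↦ hl (some k)), ?_⟩
      rw [smul_vecMul, add_vecMul, hγ.2, hμA, show b + s • b = (1 + s) • b by module, smul_smul,
        inv_mul_cancel₀ hs.ne', one_smul]
    have : γ ⬝ᵥ c ≤ ((1 + s)⁻¹ • (γ + μ)) ⬝ᵥ c := hmin hfeas
    rw [smul_dotProduct, add_dotProduct, smul_eq_mul, le_inv_mul_iff₀ hs] at this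
    linarith

end Matrix

section MultimarginalTransport

open Matrix

variable {ι : Type*} [Fintype ι] {X : ι → Type*} [∀ i, Fintype (X i)]
  [∀ i, DecidableEq (X i)]

variable (X) in
def marginalMatrix : Matrix (∀ i, X i) (Σ i, X i) ℝ := fun x r ↦ if x r.1 = r.2 then 1 else 0

lemma vecMul_marginalMatrix_apply [DecidableEq ι] (γ : (∀ i, X i) → ℝ) (r : Σ i, X i) :
    (γ ᵥ* marginalMatrix X) r = ∑ x, if x r.1 = r.2 then γ x else 0 := by
  simp [vecMul, dotProduct, marginalMatrix]

lemma marginalMatrix_mulVec_apply (u : ∀ i, X i → ℝ) (x : ∀ i, X i) :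
    (marginalMatrix X *ᵥ Sigma.uncurry u) x = ∑ i, u i (x i) := by
  simp [mulVec, dotProduct, marginalMatrix, Fintype.sum_sigma, Sigma.uncurry]

omit [∀ i, DecidableEq (X i)] in
lemma sigma_uncurry_dotProduct (u v : ∀ i, X i → ℝ) :
    Sigma.uncurry u ⬝ᵥ Sigma.uncurry v = ∑ i, ∑ a, u i a * v i a :=
  Fintype.sum_sigma _

variable (X) in
def couplings [DecidableEq ι] (ρ : ∀ i, X i → ℝ) : Set ((∀ i, X i) → ℝ) :=
  {γ | 0 ≤ γ ∧ γ ᵥ* marginalMatrix X = Sigma.uncurry ρ}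

variable [DecidableEq ι] {ρ : ∀ i, X i → ℝ}

lemma mem_couplings_iff {γ : (∀ i, X i) → ℝ} : γ ∈ couplings X ρ ↔
    (∀ x, 0 ≤ γ x) ∧ ∀ i a, (∑ x : ∀ j, X j, if x i = a then γ x else 0) = ρ i a := by
  simp [couplings, funext_iff, Sigma.forall, vecMul_marginalMatrix_apply, Pi.le_def,
    Sigma.uncurry]

lemma prod_mem_couplings (hρ0 : ∀ i a, 0 ≤ ρ i a) (hρ1 : ∀ i, ∑ a, ρ i a = 1) :
    (fun x ↦ ∏ i, ρ i (x i)) ∈ couplings X ρ := by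
  refine mem_couplings_iff.2 ⟨fun x ↦ prod_nonneg fun i _ ↦ hρ0 i (x i), fun i a ↦ ?_⟩
  have hslice : univ.filter (fun x : ∀ j, X j ↦ x i = a) =
      Fintype.piFinset (Function.update (fun j ↦ univ) i {a}) := by
    ext x
    simp only [mem_filter, mem_univ, true_and, Fintype.mem_piFinset]
    refine ⟨fun h j ↦ ?_, fun h ↦ by simpa using h i⟩
    rcases eq_or_ne j i with rfl | hj
    · simp [h]
    · simp [Function.update_of_ne hj]
  rw [← sum_filter, hslice, ← prod_univ_sum, Fintype.prod_eq_single i fun j hj ↦ by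
    simp [Function.update_of_ne hj, hρ1]]
  simp

lemma isCompact_couplings [Nonempty ι] (hρ0 : ∀ i a, 0 ≤ ρ i a) (hρ1 : ∀ i, ∑ a, ρ i a = 1) :
    IsCompact (couplings X ρ) := by
  have hclosed : IsClosed (couplings X ρ) :=
    isClosed_Ici.inter (isClosed_eq (continuous_id.matrix_vecMul continuous_const)
      continuous_const)
  refine (isCompact_Icc (a := 0) (b := 1)).of_isClosed_subset hclosed
    fun γ hγ ↦ ⟨hγ.1, fun x ↦ ?_⟩
  obtain ⟨hγ0, hγm⟩ := mem_couplings_iff.1 hγ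
  let i := Classical.arbitrary ι
  calc γ x ≤ ∑ x' : ∀ j, X j, if x' i = x i then γ x' else 0 := by
        simpa using single_le_sum (f := fun x' : ∀ j, X j ↦ if x' i = x i then γ x' else 0)
          (fun x' _ ↦ by split_ifs <;> simp [hγ0]) (mem_univ x)
    _ = ρ i (x i) := hγm i (x i)
    _ ≤ ∑ a, ρ i a := single_le_sum (fun a _ ↦ hρ0 i a) (mem_univ _)
    _ = 1 := hρ1 i

end MultimarginalTransport

theorem stmt9_general (N : ℕ) (hN : 2 ≤ N) (X : Fin N → Type*)
    [∀ i, Fintype (X i)] [∀ i, DecidableEq (X i)]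
    (ρ : ∀ i, X i → ℝ) (hρ0 : ∀ i a, 0 ≤ ρ i a) (hρ1 : ∀ i, ∑ a, ρ i a = 1)
    (c : (∀ i, X i) → ℝ) :
    ∃ (γ : (∀ i, X i) → ℝ) (u : ∀ i, X i → ℝ),
      (∀ x, 0 ≤ γ x) ∧
      (∀ (i : Fin N) (a : X i), (∑ x : ∀ j, X j, if x i = a then γ x else 0) = ρ i a) ∧
      (∀ x : ∀ j, X j, ∑ i, u i (x i) ≤ c x) ∧
      (∑ x : ∀ j, X j, γ x * c x) = (∑ i, ∑ a : X i, u i a * ρ i a) ∧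
      (∀ γ' : (∀ i, X i) → ℝ, (∀ x, 0 ≤ γ' x) →
        (∀ (i : Fin N) (a : X i), (∑ x : ∀ j, X j, if x i = a then γ' x else 0) = ρ i a) →
        (∑ x : ∀ j, X j, γ x * c x) ≤ ∑ x : ∀ j, X j, γ' x * c x) ∧
      (∀ u' : ∀ i, X i → ℝ, (∀ x : ∀ j, X j, ∑ i, u' i (x i) ≤ c x) →
        (∑ i, ∑ a : X i, u' i a * ρ i a) ≤ ∑ i, ∑ a : X i, u i a * ρ i a) := by
  have : Nonempty (Fin N) := ⟨⟨0, by omega⟩⟩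
  have hcost : Continuous fun γ : (∀ i, X i) → ℝ ↦ γ ⬝ᵥ c :=
    continuous_id.dotProduct continuous_const
  obtain ⟨γ, hγ, hmin⟩ := (isCompact_couplings hρ0 hρ1).exists_isMinOn
    ⟨_, prod_mem_couplings hρ0 hρ1⟩ hcost.continuousOn
  obtain ⟨y, hy, hval⟩ := Matrix.exists_mulVec_le_dotProduct_eq_of_isMinOn hγ hmin
  have hdual (u : ∀ i, X i → ℝ) :
      (marginalMatrix X).mulVec (Sigma.uncurry u) ≤ c ↔ ∀ x, ∑ i, u i (x i) ≤ c x := by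
    simp only [Pi.le_def, marginalMatrix_mulVec_apply]
  obtain ⟨hγ0, hγm⟩ := mem_couplings_iff.1 hγ
  refine ⟨γ, Sigma.curry y, hγ0, hγm, (hdual _).1 hy, ?_,
    fun γ' h0 hm ↦ hmin (mem_couplings_iff.2 ⟨h0, hm⟩), fun u hu ↦ ?_⟩
  · rw [← sigma_uncurry_dotProduct, Sigma.uncurry_curry]
    exact hval.symm
  · rw [← sigma_uncurry_dotProduct, ← sigma_uncurry_dotProduct, Sigma.uncurry_curry, hval]
    exact Matrix.dotProduct_le_of_vecMul_eq hγ.1 hγ.2 ((hdual u).2 hu)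

/-- finite linear programming duality for multimarginal optimal transport with
finitely many states: the minimum of ∫ c̃ dγ over couplings with prescribed marginals equals
the maximum of the dual linear functional over feasible potentials, both attained. -/
theorem stmt9 (N : ℕ) (hN : 2 ≤ N) (X : Fin N → Type*)
    [∀ i, Fintype (X i)] [∀ i, DecidableEq (X i)] [∀ i, Nonempty (X i)]
    (ρ : ∀ i, X i → ℝ) (hρ0 : ∀ i a, 0 ≤ ρ i a) (hρ1 : ∀ i, ∑ a, ρ i a = 1)
    (c : (∀ i, X i) → ℝ) :
    ∃ (γ : (∀ i, X i) → ℝ) (u : ∀ i, X i → ℝ),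
      (∀ x, 0 ≤ γ x) ∧
      (∀ (i : Fin N) (a : X i), (∑ x : ∀ j, X j, if x i = a then γ x else 0) = ρ i a) ∧
      (∀ x : ∀ j, X j, ∑ i, u i (x i) ≤ c x) ∧
      (∑ x : ∀ j, X j, γ x * c x) = (∑ i, ∑ a : X i, u i a * ρ i a) ∧
      (∀ γ' : (∀ i, X i) → ℝ, (∀ x, 0 ≤ γ' x) →
        (∀ (i : Fin N) (a : X i), (∑ x : ∀ j, X j, if x i = a then γ' x else 0) = ρ i a) →
        (∑ x : ∀ j, X j, γ x * c x) ≤ ∑ x : ∀ j, X j, γ' x * c x) ∧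
      (∀ u' : ∀ i, X i → ℝ, (∀ x : ∀ j, X j, ∑ i, u' i (x i) ≤ c x) →
        (∑ i, ∑ a : X i, u' i a * ρ i a) ≤ ∑ i, ∑ a : X i, u i a * ρ i a) :=
  stmt9_general N hN X ρ hρ0 hρ1 c
end

section
/- Let P be a probability measure on (ℝ³)^N with i-th marginals ν₁,…,ν_N, decomposed as P = λ₁P₁ + ⋯ + λ_N P_N + P_R where λᵢ ∈ (0,1] and λ₁|P₁| = ⋯ = λ_N|P_N|. Let νᵢᵏ denote the k-th marginal of λᵢPᵢ, and define P̃ᵢ = ν₁ⁱ ⊗ ν₂^{i+1} ⊗ ⋯ ⊗ ν_N^{i+N−1} (indices mod N), rescaled so that |P̃ᵢ| = λᵢ|Pᵢ|. Then P̃ := P_R + P̃₁ + ⋯ + P̃_N has the same marginals as P. -/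
/-!
The k-th marginal of a product of measures is its k-th factor scaled by the masses of the other
factors, so when all factors have mass m the normalization by m^(N-1) returns exactly the factor.
The k-th factor of P̃ᵢ is the k-th marginal of λ_{i+k} P_{i+k}, and as i runs over ℤ/N so does
i + k: summed over i, the k-th marginals of the P̃ᵢ add up to that of ∑ᵢ λᵢ Pᵢ.
-/

open MeasureTheory Filter Topology
open scoped ENNReal

noncomputable section

namespace MeasureTheory.Measure

/-- The zero-mass case needs no separate treatment: then `μ k = 0`, and `⊤ • 0 = 0`. -/
theorem map_eval_smul_pi_of_measure_univ_eq {ι : Type*} [Fintype ι] {α : ι → Type*}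
    [∀ i, MeasurableSpace (α i)] (μ : ∀ i, Measure (α i)) [∀ i, IsFiniteMeasure (μ i)]
    {m : ℝ≥0∞} (hμ : ∀ i, μ i Set.univ = m) (k : ι) :
    ((m ^ (Fintype.card ι - 1))⁻¹ • Measure.pi μ).map (fun x => x k) = μ k := by
  classical
  rw [Measure.map_smul, pi_map_eval, Finset.prod_congr rfl fun j _ => hμ j, Finset.prod_const,
    Finset.card_erase_of_mem (Finset.mem_univ k), Finset.card_univ, smul_smul]
  rcases eq_or_ne m 0 with rfl | hm0
  · rw [measure_univ_eq_zero.mp (hμ k), smul_zero]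
  · have hm_top : m ≠ ∞ := hμ k ▸ measure_ne_top _ _
    rw [ENNReal.inv_mul_cancel (pow_ne_zero _ hm0) (ENNReal.pow_ne_top hm_top), one_smul]

theorem map_eval_sum_smul_pi_map_eval_add {ι α : Type*} [Fintype ι] [AddGroup ι]
    [MeasurableSpace α] (Q : ι → Measure (ι → α)) [∀ i, IsFiniteMeasure (Q i)]
    {m : ℝ≥0∞} (hQ : ∀ i, Q i Set.univ = m) (k : ι) :
    (∑ i, (m ^ (Fintype.card ι - 1))⁻¹ •
        Measure.pi (fun j => (Q (i + j)).map (fun x => x j))).map (fun x => x k) =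
      (∑ i, Q i).map (fun x => x k) := by
  have hmarginal_mass : ∀ i j, (Q (i + j)).map (fun x => x j) Set.univ = m := fun i j => by
    rw [map_apply (measurable_pi_apply j) MeasurableSet.univ, Set.preimage_univ, hQ]
  have hk : Measurable fun x : ι → α => x k := measurable_pi_apply k
  rw [map_finset_sum' hk.aemeasurable, map_finset_sum' hk.aemeasurable,
    Finset.sum_congr rfl fun i _ =>
      map_eval_smul_pi_of_measure_univ_eq _ (hmarginal_mass i) k]
  exact Fintype.sum_equiv (Equiv.addRight k) _ _ fun _ => rfl

end MeasureTheory.Measure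

theorem stmt14_general (N : ℕ)
    (P PR : Measure (Fin N → E3)) (Ppart : Fin N → Measure (Fin N → E3))
    [∀ i, IsFiniteMeasure (Ppart i)]
    (lam : Fin N → ℝ≥0∞) (hlam : ∀ i, 0 < lam i ∧ lam i ≤ 1)
    (m : ℝ≥0∞) (hm : ∀ i, lam i * Ppart i Set.univ = m)
    (hdecomp : P = PR + ∑ i, lam i • Ppart i) :
    ∀ k : Fin N,
      Measure.map (fun x => x k)
        (PR + ∑ i : Fin N, (m ^ (N - 1))⁻¹ •
          Measure.pi (fun j : Fin N =>
            Measure.map (fun x => x j) (lam (i + j) • Ppart (i + j)))) =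
      Measure.map (fun x => x k) P := by
  intro k
  have : NeZero N := ⟨k.pos.ne'⟩
  have : ∀ i, IsFiniteMeasure (lam i • Ppart i) := fun i =>
    (Ppart i).smul_finite (ne_top_of_le_ne_top ENNReal.one_ne_top (hlam i).2)
  have hswap := Measure.map_eval_sum_smul_pi_map_eval_add (fun i => lam i • Ppart i)
    (fun i => by rw [Measure.smul_apply, smul_eq_mul, hm]) k
  rw [Fintype.card_fin] at hswap
  rw [hdecomp, Measure.map_add _ _ (measurable_pi_apply k),
    Measure.map_add _ _ (measurable_pi_apply k)]
  -- `hswap` adds in `Fin N` through the `AddGroup` instance, which `rw` does not unfold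
  exact congrArg _ hswap

/-- the swapping construction. If P = P_R + Σᵢ λᵢ Pᵢ with
λ₁|P₁| = ⋯ = λ_N|P_N| = m, and P̃ᵢ is the (mass-m normalized) product of the marginals
νᵏ of the pieces λ_j P_j taken with cyclically shifted indices, then
P̃ = P_R + Σᵢ P̃ᵢ has the same marginals as P. -/
theorem stmt14 (N : ℕ) (hN : 2 ≤ N)
    (P PR : Measure (Fin N → E3)) (Ppart : Fin N → Measure (Fin N → E3))
    [IsProbabilityMeasure P] [IsFiniteMeasure PR] [∀ i, IsFiniteMeasure (Ppart i)]
    (lam : Fin N → ℝ≥0∞) (hlam : ∀ i, 0 < lam i ∧ lam i ≤ 1)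
    (m : ℝ≥0∞) (hm : ∀ i, lam i * Ppart i Set.univ = m)
    (hdecomp : P = PR + ∑ i, lam i • Ppart i) :
    ∀ k : Fin N,
      Measure.map (fun x => x k)
        (PR + ∑ i : Fin N, (m ^ (N - 1))⁻¹ •
          Measure.pi (fun j : Fin N =>
            Measure.map (fun x => x j) (lam (i + j) • Ppart (i + j)))) =
      Measure.map (fun x => x k) P :=
  stmt14_general N P PR Ppart lam hlam m hm hdecomp
end
end

section
/- Let ρ be an atomless probability measure on ℝ³ with finite minimal Coulomb cost, and suppose there exists a bounded Kantorovich potential u (a bounded maximizer of the dual problem). Then there exists α > 0 such that every minimizer P of the Coulomb multimarginal problem satisfies P(D_α) = 0, where D_α = {(x₁,…,x_N) : |xᵢ−x_j| ≤ α for some i ≠ j}. In particular, the bound follows because u(x₁)+⋯+u(x_N) = c(x₁,…,x_N) P-a.e. -/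
/-!
By duality, every minimizer `P` satisfies `∫ c dP = N ∫ u dρ = ∫ ∑ u(xᵢ) dP`, so once the
constraint `∑ u(xᵢ) ≤ c(x)` is known `P`-a.e. it is saturated `P`-a.e. With `|u| ≤ M` and
`α = 1/(NM + 1)`, the cost exceeds `∑ u(xᵢ)` by at least `1` on `D_α`, hence `P(D_α) = 0`.

The constraint is only given `ρ^⊗N`-a.e., and `P` may be singular with respect to `ρ^⊗N`.
It is transferred to `P` by averaging it over products of small balls `B(xᵢ, r)`, which have
positive `ρ^⊗N`-mass around `P`-a.e. point, and letting `r → 0`: the averages of `u` converge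
by the Lebesgue differentiation theorem, and an upper bound for `c` on the product of balls
converges to `c(x)`.
-/

open MeasureTheory Filter Topology
open scoped ENNReal

noncomputable section

open Metric Set ProbabilityTheory

theorem MeasureTheory.ofReal_integral_le_lintegral_ofReal {α : Type*} [MeasurableSpace α]
    {μ : Measure α} (f : α → ℝ) :
    ENNReal.ofReal (∫ x, f x ∂μ) ≤ ∫⁻ x, ENNReal.ofReal (f x) ∂μ := by
  by_cases hf : Integrable f μ
  · refine ENNReal.ofReal_le_of_le_toReal ?_
    rw [integral_eq_lintegral_pos_part_sub_lintegral_neg_part hf]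
    exact sub_le_self _ ENNReal.toReal_nonneg
  · simp [integral_undef hf]

theorem MeasureTheory.integral_sum_comp_eval {ι X : Type*} [Fintype ι] [MeasurableSpace X]
    {P : Measure (ι → X)} {f : X → ℝ} (hf : ∀ i, Integrable f (P.map fun x => x i)) :
    ∫ x, ∑ i, f (x i) ∂P = ∑ i, ∫ y, f y ∂(P.map fun x => x i) := by
  have hmeas : ∀ i, AEMeasurable (fun x : ι → X => x i) P := fun i =>
    (measurable_pi_apply i).aemeasurable
  have hint : ∀ i, Integrable (fun x : ι → X => f (x i)) P := fun i =>
    (integrable_map_measure (hf i).1 (hmeas i)).1 (hf i)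
  rw [integral_finsetSum _ fun i _ => hint i]
  exact Finset.sum_congr rfl fun i _ => (integral_map (hmeas i) (hf i).1).symm

theorem ProbabilityTheory.setAverage_eq_integral_cond {X E : Type*} [MeasurableSpace X]
    [NormedAddCommGroup E] [NormedSpace ℝ E] (μ : Measure X) (f : X → E) (s : Set X) :
    ⨍ x in s, f x ∂μ = ∫ x, f x ∂μ[|s] := by
  rw [average, Measure.restrict_apply_univ, ProbabilityTheory.cond]

theorem MeasureTheory.Measure.pi_cond {ι X : Type*} [Fintype ι] [MeasurableSpace X]
    (μ : Measure X) [IsFiniteMeasure μ] {s : ι → Set X} (hs : ∀ i, MeasurableSet (s i)) :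
    Measure.pi (fun i => μ[|s i]) = (Measure.pi fun _ => μ)[|univ.pi s] := by
  refine Measure.pi_eq fun t ht => ?_
  rw [cond_apply (MeasurableSet.univ_pi hs), ← Set.pi_inter_distrib, Measure.pi_pi,
    Measure.pi_pi, ENNReal.prod_inv_distrib, ← Finset.prod_mul_distrib]
  · exact Finset.prod_congr rfl fun i _ => (cond_apply (hs i) μ (t i)).symm
  · exact fun i _ j _ _ => Or.inr (measure_ne_top μ (s j))

theorem ofReal_sum_setAverage_le {ι X : Type*} [Fintype ι] [MeasurableSpace X]
    (μ : Measure X) [IsFiniteMeasure μ] {u : X → ℝ} (hu : Integrable u μ) {s : ι → Set X}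
    (hs : ∀ i, MeasurableSet (s i)) (hs₀ : ∀ i, μ (s i) ≠ 0) {C : ℝ≥0∞}
    (hC : ∀ᵐ z ∂(Measure.pi fun _ => μ), z ∈ univ.pi s → ENNReal.ofReal (∑ i, u (z i)) ≤ C) :
    ENNReal.ofReal (∑ i, ⨍ x in s i, u x ∂μ) ≤ C := by
  have : ∀ i, IsProbabilityMeasure μ[|s i] := fun i => cond_isProbabilityMeasure (hs₀ i)
  have hint : ∀ i, Integrable u μ[|s i] := fun i =>
    hu.restrict.smul_measure (ENNReal.inv_ne_top.2 (hs₀ i))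
  have hCν : ∀ᵐ z ∂(Measure.pi fun i => μ[|s i]), ENNReal.ofReal (∑ i, u (z i)) ≤ C := by
    rw [Measure.pi_cond μ hs]
    filter_upwards [cond_absolutelyContinuous.ae_le hC, ae_cond_mem (MeasurableSet.univ_pi hs)]
      with z hz hzs using hz hzs
  set ν := Measure.pi fun i => μ[|s i]
  have hmarg : ∀ i, ν.map (fun z => z i) = μ[|s i] := fun i =>
    (measurePreserving_eval _ i).map_eq
  calc ENNReal.ofReal (∑ i, ⨍ x in s i, u x ∂μ) = ENNReal.ofReal (∫ z, ∑ i, u (z i) ∂ν) := by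
        rw [integral_sum_comp_eval fun i => (hmarg i).symm ▸ hint i]
        simp only [hmarg, setAverage_eq_integral_cond]
    _ ≤ ∫⁻ z, ENNReal.ofReal (∑ i, u (z i)) ∂ν := ofReal_integral_le_lintegral_ofReal _
    _ ≤ ∫⁻ _, C ∂ν := lintegral_mono_ae hCν
    _ = C := by simp

theorem ae_tendsto_setAverage_closedBall {X E : Type*} [MetricSpace X] [MeasurableSpace X]
    [BorelSpace X] [SecondCountableTopology X] [HasBesicovitchCovering X]
    [NormedAddCommGroup E] [NormedSpace ℝ E] [CompleteSpace E]
    (μ : Measure X) [IsLocallyFiniteMeasure μ] {f : X → E} (hf : LocallyIntegrable f μ) :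
    ∀ᵐ y ∂μ, (∀ᶠ r in 𝓝[>] 0, 0 < μ (closedBall y r)) ∧
      Tendsto (fun r => ⨍ z in closedBall y r, f z ∂μ) (𝓝[>] 0) (𝓝 (f y)) := by
  filter_upwards [(Besicovitch.vitaliFamily μ).ae_eventually_measure_pos,
    (Besicovitch.vitaliFamily μ).ae_tendsto_average hf] with y hpos hlim
  exact ⟨Besicovitch.tendsto_filterAt μ y hpos, hlim.comp (Besicovitch.tendsto_filterAt μ y)⟩

theorem MeasureTheory.measure_eq_zero_of_add_one_le {α : Type*} [MeasurableSpace α]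
    {μ : Measure α} {f g : α → ℝ≥0∞} {s : Set α} {c : ℝ≥0∞} (hs : MeasurableSet s)
    (hfg : ∀ᵐ x ∂μ, f x ≤ g x) (hfg_one : ∀ᵐ x ∂μ, x ∈ s → f x + 1 ≤ g x)
    (hf : c ≤ ∫⁻ x, f x ∂μ) (hg : ∫⁻ x, g x ∂μ ≤ c) (hc : c ≠ ∞) : μ s = 0 := by
  have hfsg : ∀ᵐ x ∂μ, f x + s.indicator 1 x ≤ g x := by
    filter_upwards [hfg, hfg_one] with x h h_one
    by_cases hx : x ∈ s
    · simpa [hx] using h_one hx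
    · simpa [hx] using h
  have : c + μ s ≤ c + 0 :=
    calc c + μ s ≤ ∫⁻ x, f x ∂μ + ∫⁻ x, s.indicator 1 x ∂μ := by
          rw [lintegral_indicator_one hs]; gcongr
      _ ≤ ∫⁻ x, (f x + s.indicator 1 x) ∂μ := le_lintegral_add _ _
      _ ≤ ∫⁻ x, g x ∂μ := lintegral_mono_ae hfsg
      _ ≤ c + 0 := by rw [add_zero]; exact hg
  exact nonpos_iff_eq_zero.1 ((ENNReal.add_le_add_iff_left hc).1 this)

/-- An upper bound for `coulomb N` on the product of the balls `closedBall (x i) r`. A pair at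
distance at most `2 * r` contributes `⊤`, since `ENNReal.ofReal` sends negative reals to `0`. -/
def coulombShrunk (N : ℕ) (r : ℝ) (x : Fin N → E3) : ℝ≥0∞ :=
  ∑ p ∈ Finset.univ.filter (fun p : Fin N × Fin N => p.1 < p.2),
    (ENNReal.ofReal (dist (x p.1) (x p.2) - 2 * r))⁻¹

theorem coulomb_le_coulombShrunk {N : ℕ} {r : ℝ} {x z : Fin N → E3}
    (h : ∀ i, dist (z i) (x i) ≤ r) : coulomb N z ≤ coulombShrunk N r x := by
  refine Finset.sum_le_sum fun p _ => ENNReal.inv_le_inv.2 (ENNReal.ofReal_le_ofReal ?_)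
  have := dist_triangle4 (x p.1) (z p.1) (z p.2) (x p.2)
  rw [dist_comm (x p.1) (z p.1)] at this
  linarith [h p.1, h p.2]

theorem tendsto_coulombShrunk (N : ℕ) (x : Fin N → E3) :
    Tendsto (fun r => coulombShrunk N r x) (𝓝 0) (𝓝 (coulomb N x)) := by
  have : Continuous fun r => coulombShrunk N r x :=
    continuous_finsetSum _ fun p _ => continuous_inv.comp
      (ENNReal.continuous_ofReal.comp (continuous_const.sub (continuous_const.mul continuous_id)))
  convert this.tendsto 0 using 2
  simp [coulombShrunk, coulomb]

theorem inv_ofReal_le_coulomb {N : ℕ} {x : Fin N → E3} {i j : Fin N} {α : ℝ} (hij : i ≠ j)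
    (h : dist (x i) (x j) ≤ α) : (ENNReal.ofReal α)⁻¹ ≤ coulomb N x := by
  wlog hlt : i < j generalizing i j
  · rw [dist_comm] at h
    exact this hij.symm h (lt_of_le_of_ne (not_lt.1 hlt) hij.symm)
  have hmem : (i, j) ∈ Finset.univ.filter (fun p : Fin N × Fin N => p.1 < p.2) :=
    Finset.mem_filter.2 ⟨Finset.mem_univ _, hlt⟩
  have hterm := Finset.single_le_sum_of_canonicallyOrdered
    (f := fun p : Fin N × Fin N => (ENNReal.ofReal (dist (x p.1) (x p.2)))⁻¹) hmem
  rw [coulomb]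
  exact (ENNReal.inv_le_inv.2 (ENNReal.ofReal_le_ofReal h)).trans hterm

theorem ofReal_sum_add_one_le_coulomb {N : ℕ} {x : Fin N → E3} {u : E3 → ℝ} {M : ℝ}
    (hM : ∀ y, |u y| ≤ M) {i j : Fin N} (hij : i ≠ j) (h : dist (x i) (x j) ≤ (N * M + 1)⁻¹) :
    ENNReal.ofReal (∑ i, u (x i)) + 1 ≤ coulomb N x := by
  have hM₀ : 0 ≤ M := (abs_nonneg _).trans (hM (x i))
  have hsum : ∑ i, u (x i) ≤ N * M := by
    simpa using Finset.sum_le_sum fun i (_ : i ∈ Finset.univ) => (abs_le.1 (hM (x i))).2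
  calc ENNReal.ofReal (∑ i, u (x i)) + 1 ≤ ENNReal.ofReal (N * M) + 1 := by gcongr
    _ = (ENNReal.ofReal (N * M + 1)⁻¹)⁻¹ := by
        rw [ENNReal.ofReal_inv_of_pos (by positivity), inv_inv,
          ENNReal.ofReal_add (by positivity) zero_le_one, ENNReal.ofReal_one]
    _ ≤ coulomb N x := inv_ofReal_le_coulomb hij h

theorem ae_ofReal_sum_le_coulomb {N : ℕ} {ρ : Measure E3} [IsFiniteMeasure ρ] {u : E3 → ℝ}
    (hu : Integrable u ρ)
    (hfeas : ∀ᵐ z ∂(Measure.pi fun _ : Fin N => ρ), ENNReal.ofReal (∑ i, u (z i)) ≤ coulomb N z)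
    {P : Measure (Fin N → E3)} (hP : ∀ i, P.map (fun x => x i) = ρ) :
    ∀ᵐ x ∂P, ENNReal.ofReal (∑ i, u (x i)) ≤ coulomb N x := by
  have hρ := ae_tendsto_setAverage_closedBall ρ hu.locallyIntegrable
  have hρP : ∀ᵐ x ∂P, ∀ i, (∀ᶠ r in 𝓝[>] 0, 0 < ρ (closedBall (x i) r)) ∧
      Tendsto (fun r => ⨍ z in closedBall (x i) r, u z ∂ρ) (𝓝[>] 0) (𝓝 (u (x i))) :=
    ae_all_iff.2 fun i =>
      ae_of_ae_map (measurable_pi_apply i).aemeasurable (by rw [hP i]; exact hρ)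
  filter_upwards [hρP] with x hx
  choose hpos hlim using hx
  have hbound : ∀ᶠ r in 𝓝[>] 0,
      ENNReal.ofReal (∑ i, ⨍ z in closedBall (x i) r, u z ∂ρ) ≤ coulombShrunk N r x := by
    filter_upwards [eventually_all.2 hpos] with r hr
    refine ofReal_sum_setAverage_le ρ hu (fun _ => measurableSet_closedBall)
      (fun i => (hr i).ne') ?_
    filter_upwards [hfeas] with z hz hzB
    exact hz.trans (coulomb_le_coulombShrunk fun i => mem_closedBall.1 (hzB i (mem_univ i)))
  exact le_of_tendsto_of_tendsto
    ((ENNReal.continuous_ofReal.tendsto _).comp (tendsto_finsetSum _ fun i _ => hlim i))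
    ((tendsto_coulombShrunk N x).mono_left nhdsWithin_le_nhds) hbound

theorem stmt18_general (N : ℕ) (ρ : Measure E3) [IsProbabilityMeasure ρ]
    (u : E3 → ℝ) (hu : Integrable u ρ) (hb : ∃ M : ℝ, ∀ y, |u y| ≤ M)
    (hfeas : ∀ᵐ x ∂(Measure.pi fun _ : Fin N => ρ),
      ENNReal.ofReal (∑ i, u (x i)) ≤ coulomb N x)
    (hdual : sInf {v : ℝ≥0∞ | ∃ P : Measure (Fin N → E3), IsProbabilityMeasure P ∧
        (∀ i : Fin N, P.map (fun x => x i) = ρ) ∧ v = ∫⁻ x, coulomb N x ∂P} =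
      ENNReal.ofReal ((N : ℝ) * ∫ y, u y ∂ρ)) :
    ∃ α : ℝ, 0 < α ∧ ∀ P : Measure (Fin N → E3), IsProbabilityMeasure P →
      (∀ i : Fin N, P.map (fun x => x i) = ρ) →
      (∀ P' : Measure (Fin N → E3), IsProbabilityMeasure P' →
        (∀ i : Fin N, P'.map (fun x => x i) = ρ) →
        ∫⁻ x, coulomb N x ∂P ≤ ∫⁻ x, coulomb N x ∂P') →
      P {x : Fin N → E3 | ∃ i j : Fin N, i ≠ j ∧ dist (x i) (x j) ≤ α} = 0 := by
  obtain ⟨M, hM⟩ := hb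
  have hM₀ : 0 ≤ M := (abs_nonneg _).trans (hM 0)
  refine ⟨(N * M + 1)⁻¹, by positivity, fun P hP hPρ hmin => ?_⟩
  have hcost : ∫⁻ x, coulomb N x ∂P = ENNReal.ofReal (N * ∫ y, u y ∂ρ) :=
    hdual ▸ le_antisymm (le_sInf fun _ ⟨P', hP', hP'ρ, hv⟩ => hv ▸ hmin P' hP' hP'ρ)
      (sInf_le ⟨P, hP, hPρ, rfl⟩)
  have hsum : ∫ x, ∑ i, u (x i) ∂P = N * ∫ y, u y ∂ρ := by
    simpa only [hPρ, Finset.sum_const, Finset.card_univ, Fintype.card_fin, nsmul_eq_mul] using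
      integral_sum_comp_eval (P := P) fun i => (hPρ i).symm ▸ hu
  exact measure_eq_zero_of_add_one_le (by measurability) (ae_ofReal_sum_le_coulomb hu hfeas hPρ)
    (Eventually.of_forall fun x ⟨i, j, hij, hdist⟩ => ofReal_sum_add_one_le_coulomb hM hij hdist)
    (hsum ▸ ofReal_integral_le_lintegral_ofReal _) hcost.le ENNReal.ofReal_ne_top

/-- given a bounded Kantorovich potential u whose dual value equals the
minimal Coulomb cost, there is α > 0 such that every minimizer P of the multimarginal
Coulomb problem satisfies P(D_α) = 0. -/
theorem stmt18 (N : ℕ) (hN : 2 ≤ N) (ρ : Measure E3) [IsProbabilityMeasure ρ]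
    (hat : ∀ a : E3, ρ {a} = 0)
    (hfin : ∃ P : Measure (Fin N → E3), IsProbabilityMeasure P ∧
      (∀ i : Fin N, P.map (fun x => x i) = ρ) ∧ ∫⁻ x, coulomb N x ∂P ≠ ⊤)
    (u : E3 → ℝ) (hu : Integrable u ρ) (hb : ∃ M : ℝ, ∀ y, |u y| ≤ M)
    (hfeas : ∀ᵐ x ∂(Measure.pi fun _ : Fin N => ρ),
      ENNReal.ofReal (∑ i, u (x i)) ≤ coulomb N x)
    (hdual : sInf {v : ℝ≥0∞ | ∃ P : Measure (Fin N → E3), IsProbabilityMeasure P ∧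
        (∀ i : Fin N, P.map (fun x => x i) = ρ) ∧ v = ∫⁻ x, coulomb N x ∂P} =
      ENNReal.ofReal ((N : ℝ) * ∫ y, u y ∂ρ)) :
    ∃ α : ℝ, 0 < α ∧ ∀ P : Measure (Fin N → E3), IsProbabilityMeasure P →
      (∀ i : Fin N, P.map (fun x => x i) = ρ) →
      (∀ P' : Measure (Fin N → E3), IsProbabilityMeasure P' →
        (∀ i : Fin N, P'.map (fun x => x i) = ρ) →
        ∫⁻ x, coulomb N x ∂P ≤ ∫⁻ x, coulomb N x ∂P') →
      P {x : Fin N → E3 | ∃ i j : Fin N, i ≠ j ∧ dist (x i) (x j) ≤ α} = 0 :=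
  stmt18_general N ρ u hu hb hfeas hdual
end
end
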